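/- Two-dimensional shifting (core of the (1+1/k)² approximation): Let S be a finite set of points in the Euclidean plane and ℓ₁, ℓ₂ positive integers. For shifts j₁ ∈ {0,…,ℓ₁-1}, j₂ ∈ {0,…,ℓ₂-1} and integers k₁, k₂, let B = {p ∈ S : 2(ℓ₁k₁ + j₁) ≤ p₁ < 2(ℓ₁(k₁+1) + j₁) and 2(ℓ₂k₂ + j₂) ≤ p₂ < 2(ℓ₂(k₂+1) + j₂)} be the corresponding rectangular block. Then there exist shifts j₁, j₂ such that Σ_{k₁,k₂} γ_S(B_{j₁,j₂,k₁,k₂}) ≤ (1 + 1/ℓ₁)(1 + 1/ℓ₂) · γ_S(S), where the sum ranges over the (finitely many) pairs (k₁, k₂) with nonempty block and γ_S(T) denotes the minimum cardinality of a subset of S that dominates T. -/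

import Mathlib

/-- The Euclidean plane. -/
abbrev Plane : Type := EuclideanSpace ℝ (Fin 2)

noncomputable instance : DecidableEq Plane := Classical.decEq _

attribute [local instance] Classical.propDecidable

/-- `D` dominates `T` if every point of `T` is within distance `1` of some point of `D`. -/
def Dominates (D T : Finset Plane) : Prop := ∀ p ∈ T, ∃ q ∈ D, dist p q ≤ 1

/-- `gamma S T` is the minimum cardinality of a subset of `S` that dominates `T`. -/
noncomputable def gamma (S T : Finset Plane) : ℕ :=
  sInf {n : ℕ | ∃ D ⊆ S, Dominates D T ∧ D.card = n}

/-- The rectangular block of `S` with horizontal shift `j₁`, vertical shift `j₂` and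
indices `k₁, k₂`: the points `p ∈ S` with `2(ℓ₁k₁ + j₁) ≤ p₁ < 2(ℓ₁(k₁+1) + j₁)` and
`2(ℓ₂k₂ + j₂) ≤ p₂ < 2(ℓ₂(k₂+1) + j₂)`. -/
noncomputable def block2 (S : Finset Plane) (ℓ₁ ℓ₂ j₁ j₂ : ℕ) (k₁ k₂ : ℤ) : Finset Plane :=
  S.filter fun p =>
    (2 * ((ℓ₁ : ℝ) * (k₁ : ℝ) + (j₁ : ℝ)) ≤ p 0 ∧
      p 0 < 2 * ((ℓ₁ : ℝ) * ((k₁ : ℝ) + 1) + (j₁ : ℝ))) ∧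
    (2 * ((ℓ₂ : ℝ) * (k₂ : ℝ) + (j₂ : ℝ)) ≤ p 1 ∧
      p 1 < 2 * ((ℓ₂ : ℝ) * ((k₂ : ℝ) + 1) + (j₂ : ℝ)))

/-!
Fix a minimum dominating set `D` of `S`. A block is dominated by the points of `D` within
distance `1` of it, so for fixed shifts the sum of the `γ_S(B)` is at most the number of pairs
`(q, B)` with `q ∈ D` within distance `1` of `B`. In each coordinate, the strips meeting
`[x - 1, x + 1]` form an interval of indices of length `1 + sⱼ(x)`, where `sⱼ(x) ∈ {0, 1}`.
Since the strip boundaries of the `ℓ` shifts are spaced `2` apart, exactly one shift has a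
boundary in `(x - 1, x + 1]`, i.e. `∑ⱼ sⱼ(x) = 1`. Hence summing over all `ℓ₁ ℓ₂` pairs of shifts
gives at most `(ℓ₁ + 1)(ℓ₂ + 1)|D|`, and some pair of shifts is at most the average.
-/

open Finset

noncomputable def stripIndex (ℓ j : ℕ) (x : ℝ) : ℤ := ⌊(x - 2 * j) / (2 * ℓ)⌋

lemma stripIndex_eq_iff {ℓ : ℕ} (hℓ : 0 < ℓ) (j : ℕ) (x : ℝ) (k : ℤ) :
    stripIndex ℓ j x = k ↔
      2 * ((ℓ : ℝ) * k + j) ≤ x ∧ x < 2 * ((ℓ : ℝ) * (k + 1) + j) := by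
  have hpos : (0 : ℝ) < 2 * ℓ := by positivity
  rw [stripIndex, Int.floor_eq_iff, le_div_iff₀ hpos, div_lt_iff₀ hpos]
  constructor <;> rintro ⟨h, h'⟩ <;> constructor <;> linarith

lemma stripIndex_mono (ℓ j : ℕ) : Monotone (stripIndex ℓ j) := fun _ _ hxy =>
  Int.floor_mono <| div_le_div_of_nonneg_right (by linarith) (by positivity)

/-- Moving the point by `2` has the same effect as lowering every shift by one, and
lowering shift `0` to `-1` is the same as moving up to shift `ℓ - 1` one strip further. -/
lemma sum_stripIndex_add_two {ℓ : ℕ} (hℓ : 0 < ℓ) (x : ℝ) :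
    ∑ j ∈ range ℓ, stripIndex ℓ j (x + 2) = ∑ j ∈ range ℓ, stripIndex ℓ j x + 1 := by
  obtain ⟨n, rfl⟩ := Nat.exists_eq_add_one_of_ne_zero hℓ.ne'
  have hwrap : stripIndex (n + 1) 0 (x + 2) = stripIndex (n + 1) n x + 1 := by
    rw [stripIndex, stripIndex, ← Int.floor_add_one]
    congr 1
    field_simp
    push_cast
    ring
  have hshift (j : ℕ) : stripIndex (n + 1) (j + 1) (x + 2) = stripIndex (n + 1) j x := by
    simp only [stripIndex]
    push_cast
    ring_nf
  rw [sum_range_succ', sum_range_succ, hwrap]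
  simp only [hshift]
  ring

noncomputable def neighborIndices (ℓ j : ℕ) (x : ℝ) : Finset ℤ :=
  Icc (stripIndex ℓ j (x - 1)) (stripIndex ℓ j (x + 1))

lemma stripIndex_mem_neighborIndices (ℓ j : ℕ) {x y : ℝ} (h : dist y x ≤ 1) :
    stripIndex ℓ j y ∈ neighborIndices ℓ j x := by
  rw [Real.dist_eq, abs_le] at h
  exact mem_Icc.2 ⟨stripIndex_mono ℓ j (by linarith), stripIndex_mono ℓ j (by linarith)⟩

lemma sum_card_neighborIndices {ℓ : ℕ} (hℓ : 0 < ℓ) (x : ℝ) :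
    ∑ j ∈ range ℓ, #(neighborIndices ℓ j x) = ℓ + 1 := by
  have hcard (j : ℕ) : (#(neighborIndices ℓ j x) : ℤ) =
      stripIndex ℓ j (x + 1) - stripIndex ℓ j (x - 1) + 1 := by
    rw [neighborIndices, Int.card_Icc_of_le]
    · ring
    · linarith [stripIndex_mono ℓ j (show x - 1 ≤ x + 1 by linarith)]
  have hstep := sum_stripIndex_add_two hℓ (x - 1)
  rw [show x - 1 + 2 = x + 1 by ring] at hstep
  zify
  simp only [hcard, sum_add_distrib, sum_sub_distrib, hstep, sum_const, card_range,
    nsmul_eq_mul, mul_one]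
  ring

lemma gamma_le_card {S T D : Finset Plane} (hDS : D ⊆ S) (hD : Dominates D T) :
    gamma S T ≤ #D :=
  Nat.sInf_le ⟨D, hDS, hD, rfl⟩

lemma exists_dominates_card_eq_gamma {S T : Finset Plane} (hTS : T ⊆ S) :
    ∃ D ⊆ S, Dominates D T ∧ #D = gamma S T :=
  Nat.sInf_mem (s := {n | ∃ D ⊆ S, Dominates D T ∧ #D = n})
    ⟨#T, T, hTS, fun p hp => ⟨p, hp, by simp⟩, rfl⟩

lemma Dominates.mono {D T T' : Finset Plane} (hD : Dominates D T) (hT' : T' ⊆ T) :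
    Dominates D T' :=
  fun p hp => hD p (hT' hp)

lemma Dominates.filter {D T : Finset Plane} (hD : Dominates D T) {P : Plane → Prop}
    [DecidablePred P] (hP : ∀ p ∈ T, ∀ q ∈ D, dist p q ≤ 1 → P q) : Dominates (D.filter P) T := by
  intro p hp
  obtain ⟨q, hq, hpq⟩ := hD p hp
  exact ⟨q, mem_filter.2 ⟨hq, hP p hp q hq hpq⟩, hpq⟩

noncomputable def blockIndex (ℓ₁ ℓ₂ j₁ j₂ : ℕ) (p : Plane) : ℤ × ℤ :=
  (stripIndex ℓ₁ j₁ (p 0), stripIndex ℓ₂ j₂ (p 1))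

lemma mem_block2_iff {ℓ₁ ℓ₂ : ℕ} (h₁ : 0 < ℓ₁) (h₂ : 0 < ℓ₂) (S : Finset Plane)
    (j₁ j₂ : ℕ) (k₁ k₂ : ℤ) (p : Plane) :
    p ∈ block2 S ℓ₁ ℓ₂ j₁ j₂ k₁ k₂ ↔ p ∈ S ∧ blockIndex ℓ₁ ℓ₂ j₁ j₂ p = (k₁, k₂) := by
  rw [block2, mem_filter, blockIndex, Prod.mk.injEq, stripIndex_eq_iff h₁,
    stripIndex_eq_iff h₂]

lemma blockIndex_mem_neighborIndices (ℓ₁ ℓ₂ j₁ j₂ : ℕ) {p q : Plane} (h : dist p q ≤ 1) :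
    blockIndex ℓ₁ ℓ₂ j₁ j₂ p ∈ neighborIndices ℓ₁ j₁ (q 0) ×ˢ neighborIndices ℓ₂ j₂ (q 1) :=
  mem_product.2
    ⟨stripIndex_mem_neighborIndices ℓ₁ j₁ ((PiLp.dist_apply_le p q 0).trans h),
      stripIndex_mem_neighborIndices ℓ₂ j₂ ((PiLp.dist_apply_le p q 1).trans h)⟩

lemma finsum_mem_nonempty_block2 {M : Type*} [AddCommMonoid M] {ℓ₁ ℓ₂ : ℕ} (h₁ : 0 < ℓ₁)
    (h₂ : 0 < ℓ₂) (S : Finset Plane) (j₁ j₂ : ℕ) (f : ℤ × ℤ → M) :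
    ∑ᶠ kk ∈ {kk : ℤ × ℤ | (block2 S ℓ₁ ℓ₂ j₁ j₂ kk.1 kk.2).Nonempty}, f kk =
      ∑ kk ∈ S.image (blockIndex ℓ₁ ℓ₂ j₁ j₂), f kk := by
  rw [← finsum_mem_coe_finset]
  congr! 2 with kk
  simp [Finset.Nonempty, mem_block2_iff h₁ h₂, and_comm]

lemma sum_gamma_block2_le {ℓ₁ ℓ₂ : ℕ} (h₁ : 0 < ℓ₁) (h₂ : 0 < ℓ₂) {S D : Finset Plane}
    (hDS : D ⊆ S) (hD : Dominates D S) (j₁ j₂ : ℕ) :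
    ∑ kk ∈ S.image (blockIndex ℓ₁ ℓ₂ j₁ j₂), gamma S (block2 S ℓ₁ ℓ₂ j₁ j₂ kk.1 kk.2) ≤
      ∑ q ∈ D, #(neighborIndices ℓ₁ j₁ (q 0)) * #(neighborIndices ℓ₂ j₂ (q 1)) := by
  set K := S.image (blockIndex ℓ₁ ℓ₂ j₁ j₂)
  set N : Plane → Finset (ℤ × ℤ) := fun q =>
    neighborIndices ℓ₁ j₁ (q 0) ×ˢ neighborIndices ℓ₂ j₂ (q 1)
  have hblock (kk : ℤ × ℤ) :
      gamma S (block2 S ℓ₁ ℓ₂ j₁ j₂ kk.1 kk.2) ≤ #(D.filter (kk ∈ N ·)) := by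
    refine gamma_le_card ((filter_subset _ _).trans hDS)
      ((hD.mono (filter_subset _ _)).filter fun p hp q _ hpq => ?_)
    obtain ⟨-, hpk⟩ := (mem_block2_iff h₁ h₂ S j₁ j₂ kk.1 kk.2 p).1 hp
    exact (show blockIndex ℓ₁ ℓ₂ j₁ j₂ p = kk from hpk) ▸
      blockIndex_mem_neighborIndices ℓ₁ ℓ₂ j₁ j₂ hpq
  calc _ ≤ ∑ kk ∈ K, #(D.filter (kk ∈ N ·)) := sum_le_sum fun kk _ => hblock kk
    _ = ∑ q ∈ D, #(K.filter (· ∈ N q)) := by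
      simp only [card_filter]
      exact sum_comm
    _ ≤ ∑ q ∈ D, #(N q) := sum_le_sum fun q _ => card_le_card fun _ hk => (mem_filter.1 hk).2
    _ = _ := by simp only [N, card_product]

lemma sum_shifts_sum_gamma_block2_le {ℓ₁ ℓ₂ : ℕ} (h₁ : 0 < ℓ₁) (h₂ : 0 < ℓ₂)
    (S : Finset Plane) :
    ∑ jj ∈ range ℓ₁ ×ˢ range ℓ₂, ∑ kk ∈ S.image (blockIndex ℓ₁ ℓ₂ jj.1 jj.2),
        gamma S (block2 S ℓ₁ ℓ₂ jj.1 jj.2 kk.1 kk.2) ≤ (ℓ₁ + 1) * (ℓ₂ + 1) * gamma S S := by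
  obtain ⟨D, hDS, hD, hDcard⟩ := exists_dominates_card_eq_gamma (subset_refl S)
  calc _ ≤ ∑ jj ∈ range ℓ₁ ×ˢ range ℓ₂, ∑ q ∈ D,
          #(neighborIndices ℓ₁ jj.1 (q 0)) * #(neighborIndices ℓ₂ jj.2 (q 1)) :=
        sum_le_sum fun jj _ => sum_gamma_block2_le h₁ h₂ hDS hD jj.1 jj.2
    _ = ∑ q ∈ D, (∑ j₁ ∈ range ℓ₁, #(neighborIndices ℓ₁ j₁ (q 0))) *
          ∑ j₂ ∈ range ℓ₂, #(neighborIndices ℓ₂ j₂ (q 1)) := by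
        rw [sum_comm]
        simp only [sum_mul_sum, sum_product]
    _ = (ℓ₁ + 1) * (ℓ₂ + 1) * gamma S S := by
        simp [sum_card_neighborIndices h₁, sum_card_neighborIndices h₂, hDcard, mul_comm]

/-- Two-dimensional shifting: there are shifts `j₁ ∈ {0, …, ℓ₁-1}` and `j₂ ∈ {0, …, ℓ₂-1}`
such that the sum, over the nonempty rectangular blocks, of the minimum sizes of dominating
sets is at most `(1 + 1/ℓ₁)(1 + 1/ℓ₂) · γ_S(S)`. -/
theorem two_dimensional_shifting (S : Finset Plane) (ℓ₁ ℓ₂ : ℕ)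
    (h₁ : 0 < ℓ₁) (h₂ : 0 < ℓ₂) :
    ∃ j₁ < ℓ₁, ∃ j₂ < ℓ₂,
      (∑ᶠ kk ∈ {kk : ℤ × ℤ | (block2 S ℓ₁ ℓ₂ j₁ j₂ kk.1 kk.2).Nonempty},
          (gamma S (block2 S ℓ₁ ℓ₂ j₁ j₂ kk.1 kk.2) : ℝ)) ≤
        (1 + 1 / (ℓ₁ : ℝ)) * (1 + 1 / (ℓ₂ : ℝ)) * (gamma S S : ℝ) := by
  have hsum : ∑ jj ∈ range ℓ₁ ×ˢ range ℓ₂, (∑ kk ∈ S.image (blockIndex ℓ₁ ℓ₂ jj.1 jj.2),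
        gamma S (block2 S ℓ₁ ℓ₂ jj.1 jj.2 kk.1 kk.2) : ℝ) ≤
      ∑ _jj ∈ range ℓ₁ ×ˢ range ℓ₂, (1 + 1 / (ℓ₁ : ℝ)) * (1 + 1 / (ℓ₂ : ℝ)) * gamma S S := by
    have hℓ₁ : (ℓ₁ : ℝ) ≠ 0 := by positivity
    have hℓ₂ : (ℓ₂ : ℝ) ≠ 0 := by positivity
    calc _ ≤ (((ℓ₁ + 1) * (ℓ₂ + 1) * gamma S S : ℕ) : ℝ) := by
          exact_mod_cast sum_shifts_sum_gamma_block2_le h₁ h₂ S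
      _ = _ := by
          rw [sum_const, card_product, card_range, card_range, nsmul_eq_mul]
          push_cast
          field_simp
  obtain ⟨⟨j₁, j₂⟩, hj, hle⟩ := exists_le_of_sum_le (by simp [h₁.ne', h₂.ne']) hsum
  rw [mem_product, mem_range, mem_range] at hj
  refine ⟨j₁, hj.1, j₂, hj.2, ?_⟩
  rw [finsum_mem_nonempty_block2 h₁ h₂]
  exact_mod_cast hle
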